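/- arXiv:2306.12569 — 4 statements merged into one kernel-verified Lean document; each statement's English description precedes it below -/
import Mathlib

section
/- Suppose the product formula S(t) = e^{−itF_d} ⋯ e^{−itF_1} satisfies S(t) = e^{−itH} + O(t^{p+1}) as t → 0, where H = ∑_{a=1}^d F_a with Hermitian F_a. Define G(t) = i (dS/dt) S(t)^{−1}. Then G(0) = H and the Taylor coefficients G_q of G(t) at t = 0 vanish for 1 ≤ q ≤ p−1. -/
open scoped Matrix

noncomputable section

attribute [local instance] Matrix.frobeniusNormedAddCommGroup Matrix.frobeniusNormedSpace
  Matrix.frobeniusNormedRing Matrix.frobeniusNormedAlgebra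

/-!
Let `e(t) = exp(-itH)`. The order condition says that `D = S - e` vanishes to order `p + 1`
at `0`; as `S` is analytic, `D'` then vanishes to order `p`. Since `e' = -iH e`,
`G - H = i (S' + iH S) S⁻¹ = i (D' + iH D) S⁻¹` also vanishes to order `p`, which for an analytic
function means that its first `p` Taylor coefficients are zero.
-/

open Asymptotics Filter Topology

section AnalyticOrder

variable {𝕜 E : Type*} [NontriviallyNormedField 𝕜] [NormedAddCommGroup E] [NormedSpace 𝕜 E]
  {f : 𝕜 → E} {z₀ : 𝕜} {n : ℕ}

theorem AnalyticAt.isBigO_sub_pow_of_natCast_le_analyticOrderAt (hf : AnalyticAt 𝕜 f z₀)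
    (hn : n ≤ analyticOrderAt f z₀) : f =O[𝓝 z₀] fun z => (z - z₀) ^ n := by
  obtain ⟨g, hg, hfg⟩ := (natCast_le_analyticOrderAt hf).mp hn
  have hg_bdd : g =O[𝓝 z₀] fun _ => (1 : 𝕜) := hg.continuousAt.isBigO_one 𝕜
  have hfg' : f =ᶠ[𝓝 z₀] fun z => (z - z₀) ^ n • g z := hfg
  simpa using hfg'.trans_isBigO ((isBigO_refl (fun z => (z - z₀) ^ n) (𝓝 z₀)).smul hg_bdd)

theorem AnalyticAt.natCast_le_analyticOrderAt_of_isBigO (hf : AnalyticAt 𝕜 f z₀)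
    (hO : f =O[𝓝 z₀] fun z => (z - z₀) ^ n) : n ≤ analyticOrderAt f z₀ := by
  by_contra! hlt
  obtain ⟨m, hm⟩ := ENat.ne_top_iff_exists.mp (hlt.trans (ENat.natCast_lt_top n)).ne
  have hmn : m < n := by exact_mod_cast hm ▸ hlt
  obtain ⟨g, hg, hg_ne, hfg⟩ := hf.analyticOrderAt_eq_natCast.mp hm.symm
  -- off `z₀`, `g = (z - z₀)⁻ᵐ • f = O((z - z₀) ^ (n - m))`, which tends to `0`
  have hg_eq : g =ᶠ[𝓝[≠] z₀] fun z => ((z - z₀) ^ m)⁻¹ • f z := by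
    filter_upwards [self_mem_nhdsWithin, nhdsWithin_le_nhds hfg] with z hz hfz
    rw [hfz, inv_smul_smul₀ (pow_ne_zero _ (sub_ne_zero_of_ne hz))]
  have hpow_eq : (fun z => ((z - z₀) ^ m)⁻¹ • (z - z₀) ^ n) =ᶠ[𝓝[≠] z₀]
      fun z => (z - z₀) ^ (n - m) := by
    filter_upwards [self_mem_nhdsWithin] with z hz
    rw [smul_eq_mul, pow_sub₀ _ (sub_ne_zero_of_ne hz) hmn.le, mul_comm]
  have hg_O : g =O[𝓝[≠] z₀] fun z => (z - z₀) ^ (n - m) :=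
    (hg_eq.trans_isBigO ((isBigO_refl _ _).smul (hO.mono nhdsWithin_le_nhds))).trans_eventuallyEq
      hpow_eq
  have hpow_lim : Tendsto (fun z => (z - z₀) ^ (n - m)) (𝓝[≠] z₀) (𝓝 0) := by
    have : ContinuousAt (fun z => (z - z₀) ^ (n - m)) z₀ := by fun_prop
    simpa [Nat.sub_ne_zero_of_lt hmn] using this.tendsto.mono_left nhdsWithin_le_nhds
  exact hg_ne (tendsto_nhds_unique (hg.continuousAt.tendsto.mono_left nhdsWithin_le_nhds)
    (hg_O.trans_tendsto hpow_lim))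

variable [CharZero 𝕜] [CompleteSpace E]

theorem AnalyticAt.iteratedDeriv_eq_zero_of_isBigO (hf : AnalyticAt 𝕜 f z₀)
    (hO : f =O[𝓝 z₀] fun z => (z - z₀) ^ n) {i : ℕ} (hi : i < n) : iteratedDeriv i f z₀ = 0 :=
  (natCast_le_analyticOrderAt_iff_iteratedDeriv_eq_zero hf).mp
    (hf.natCast_le_analyticOrderAt_of_isBigO hO) i hi

theorem AnalyticAt.deriv_isBigO_of_isBigO (hf : AnalyticAt 𝕜 f z₀)
    (hO : f =O[𝓝 z₀] fun z => (z - z₀) ^ (n + 1)) : deriv f =O[𝓝 z₀] fun z => (z - z₀) ^ n := by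
  have hle := hf.natCast_le_analyticOrderAt_of_isBigO hO
  have hf₀ : f z₀ = 0 := apply_eq_zero_of_analyticOrderAt_ne_zero
    (ne_of_gt (lt_of_lt_of_le (by exact_mod_cast n.succ_pos) hle))
  exact hf.deriv.isBigO_sub_pow_of_natCast_le_analyticOrderAt
    ((analyticOrderAt_deriv_ge_iff hf hf₀).mpr (by exact_mod_cast hle))

end AnalyticOrder

section LogDeriv

variable {𝕜 A : Type*} [NontriviallyNormedField 𝕜] [NormedRing A] [NormedAlgebra 𝕜 A]

def rightLogDeriv (S : 𝕜 → A) (t : 𝕜) : A := deriv S t * Ring.inverse (S t)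

theorem analyticAt_list_prod {ι : Type*} (l : List ι) {f : ι → 𝕜 → A} {z : 𝕜}
    (hf : ∀ i ∈ l, AnalyticAt 𝕜 (f i) z) :
    AnalyticAt 𝕜 (fun t => (l.map fun i => f i t).prod) z := by
  induction l with
  | nil => simpa using analyticAt_const
  | cons i l ih =>
    have hl := ih fun j hj => hf j (List.mem_cons_of_mem i hj)
    simpa using (hf i List.mem_cons_self).fun_mul hl

variable [CompleteSpace A]

theorem AnalyticAt.ringInverse {S : 𝕜 → A} {z : 𝕜} (hS : AnalyticAt 𝕜 S z) (hu : IsUnit (S z)) :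
    AnalyticAt 𝕜 (fun t => Ring.inverse (S t)) z := by
  have hinv := analyticAt_inverse (𝕜 := 𝕜) hu.unit
  rw [hu.unit_spec] at hinv
  exact hinv.comp hS

theorem AnalyticAt.rightLogDeriv {S : 𝕜 → A} {z : 𝕜} (hS : AnalyticAt 𝕜 S z) (hu : IsUnit (S z)) :
    AnalyticAt 𝕜 (rightLogDeriv S) z :=
  hS.deriv.mul (hS.ringInverse hu)

end LogDeriv

section Exp

open NormedSpace

variable {𝕂 A : Type*} [RCLike 𝕂] [NormedRing A] [NormedAlgebra 𝕂 A] [CompleteSpace A]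

theorem analyticAt_exp_smul_const (B : A) (t : 𝕂) :
    AnalyticAt 𝕂 (fun s : 𝕂 => exp (s • B)) t :=
  (exp_analytic (t • B)).fun_comp (f := fun s : 𝕂 => s • B) (analyticAt_id.smul analyticAt_const)

theorem rightLogDeriv_sub_isBigO_of_isBigO_sub_exp {S : 𝕂 → A} {B : A} {p : ℕ}
    (hS : AnalyticAt 𝕂 S 0) (hO : (fun t => S t - exp (t • B)) =O[𝓝 0] fun t => t ^ (p + 1)) :
    (fun t => rightLogDeriv S t - B) =O[𝓝 0] fun t => t ^ p := by
  set D := fun t => S t - exp (t • B)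
  have hD : AnalyticAt 𝕂 D 0 := hS.sub (analyticAt_exp_smul_const B 0)
  have hD' : deriv D =O[𝓝 0] fun t => t ^ p := by
    simpa using hD.deriv_isBigO_of_isBigO (n := p) (by simpa using hO)
  have hS₀ : S 0 = 1 := by
    have := hD.iteratedDeriv_eq_zero_of_isBigO (n := p + 1) (by simpa using hO) p.succ_pos
    simpa [D, sub_eq_zero] using this
  have hunit : ∀ᶠ t in 𝓝 0, IsUnit (S t) :=
    hS.continuousAt.eventually_mem (Units.isOpen.mem_nhds (hS₀ ▸ isUnit_one))
  -- `S' S⁻¹ - B = (D' - B D) S⁻¹`, because `exp (t • B)` solves `e' = B e`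
  have hid : (fun t => rightLogDeriv S t - B) =ᶠ[𝓝 0]
      fun t => (deriv D t - B * D t) * Ring.inverse (S t) := by
    filter_upwards [hS.eventually_analyticAt, hunit] with t hSt hu
    have hexp := hasDerivAt_exp_smul_const' (𝕂 := 𝕂) B t
    rw [rightLogDeriv, show deriv D t = deriv S t - B * exp (t • B) from
      (hSt.differentiableAt.hasDerivAt.sub hexp).deriv]
    have hinv : S t * Ring.inverse (S t) = 1 := Ring.mul_inverse_cancel _ hu
    simp only [D, sub_mul, mul_sub, mul_assoc, hinv]
    noncomm_ring
  have hBD : (fun t => B * D t) =O[𝓝 0] fun t => t ^ p :=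
    (hO.const_mul_left B).trans (isLittleO_pow_pow p.lt_succ_self).isBigO
  have hinv_bdd : (fun t => Ring.inverse (S t)) =O[𝓝 0] fun _ => (1 : 𝕂) :=
    (hS.ringInverse (hS₀ ▸ isUnit_one)).continuousAt.isBigO_one 𝕂
  simpa using hid.trans_isBigO ((hD'.sub hBD).mul hinv_bdd)

end Exp

theorem isBigO_pow_of_norm_le_mul_abs_pow {E : Type*} [SeminormedAddCommGroup E] {f : ℝ → E}
    {C δ : ℝ} {k : ℕ} (hδ : 0 < δ) (hf : ∀ t, |t| ≤ δ → ‖f t‖ ≤ C * |t| ^ k) :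
    f =O[𝓝 0] fun t => t ^ k := by
  refine IsBigO.of_bound C ?_
  filter_upwards [Metric.closedBall_mem_nhds (0 : ℝ) hδ] with t ht
  simpa [abs_pow] using hf t (by simpa using ht)

theorem effective_hamiltonian_taylor_vanish_general {n d p : ℕ} (hp : 1 ≤ p)
    (F : Fin d → Matrix (Fin n) (Fin n) ℂ)
    (H : Matrix (Fin n) (Fin n) ℂ)
    (S S' : ℝ → Matrix (Fin n) (Fin n) ℂ)
    (hS : ∀ t : ℝ, S t =
      ((List.ofFn fun a : Fin d =>
        NormedSpace.exp ((-(Complex.I * (t : ℂ))) • F a)).reverse).prod)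
    (hderiv : ∀ t : ℝ, HasDerivAt S (S' t) t)
    (G : ℝ → Matrix (Fin n) (Fin n) ℂ)
    (hG : ∀ t : ℝ, G t = Complex.I • (S' t * (S t)⁻¹))
    (horder : ∃ C δ : ℝ, 0 < δ ∧ ∀ t : ℝ, |t| ≤ δ →
      ‖S t - NormedSpace.exp ((-(Complex.I * (t : ℂ))) • H)‖ ≤ C * |t| ^ (p + 1)) :
    G 0 = H ∧ ∀ q : ℕ, 1 ≤ q → q ≤ p - 1 → iteratedDeriv q G 0 = 0 := by
  -- the lemmas above are applied over `ℝ`, so `t` has to act as a real scalar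
  have hsmul : ∀ (t : ℝ) (X : Matrix (Fin n) (Fin n) ℂ),
      (-(Complex.I * (t : ℂ))) • X = t • (-Complex.I • X) := fun t X => by
    rw [← Complex.coe_smul, smul_smul]
    ring_nf
  have hS_an : AnalyticAt ℝ S 0 := by
    have : S = fun t => ((List.finRange d).reverse.map
        fun a => NormedSpace.exp (t • (-Complex.I • F a))).prod := by
      funext t; simp [hS, hsmul, List.ofFn_eq_map, List.map_reverse]
    exact this ▸ analyticAt_list_prod _ fun a _ => analyticAt_exp_smul_const _ 0
  have hS₀ : S 0 = 1 := by simp [hS]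
  have hGH : (fun t => G t - H) = fun t => Complex.I • (rightLogDeriv S t - -Complex.I • H) := by
    funext t
    rw [hG, (hderiv t).deriv.symm, Matrix.nonsing_inv_eq_ringInverse, smul_sub, smul_smul]
    simp [rightLogDeriv]
  obtain ⟨C, δ, hδ, hC⟩ := horder
  have hO : (fun t => S t - NormedSpace.exp (t • (-Complex.I • H))) =O[𝓝 0]
      fun t : ℝ => t ^ (p + 1) :=
    isBigO_pow_of_norm_le_mul_abs_pow hδ fun t ht => by simpa [hsmul] using hC t ht
  have hGH_O : (fun t => G t - H) =O[𝓝 0] fun t : ℝ => (t - 0) ^ p := by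
    simp only [hGH, sub_zero]
    exact (rightLogDeriv_sub_isBigO_of_isBigO_sub_exp hS_an hO).const_smul_left Complex.I
  have hGH_an : AnalyticAt ℝ (fun t => G t - H) 0 := by
    rw [hGH]
    exact analyticAt_const.fun_smul
      ((hS_an.rightLogDeriv (hS₀ ▸ isUnit_one)).fun_sub analyticAt_const)
  have hvanish : ∀ q < p, iteratedDeriv q (fun t => G t - H) 0 = 0 := fun q hq =>
    hGH_an.iteratedDeriv_eq_zero_of_isBigO hGH_O hq
  refine ⟨by simpa [sub_eq_zero] using hvanish 0 hp, fun q hq₁ hq₂ => ?_⟩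
  rw [show G = fun t => H + (G t - H) by simp, iteratedDeriv_const_add hq₁]
  exact hvanish q (by omega)

/-- If the product formula `S(t) = e^{−itF_d}⋯e^{−itF_1}` (with Hermitian `F_a` and
`H = ∑_a F_a`) is an order-`p` formula, i.e. `S(t) = e^{−itH} + O(t^{p+1})` as `t → 0`,
then the effective Hamiltonian `G(t) = i S'(t) S(t)⁻¹` satisfies `G(0) = H` and its Taylor
coefficients `G_q = (d^q G/dt^q)(0)/q!` vanish for `1 ≤ q ≤ p − 1`.
Here `F : Fin d → _` with `F i` playing the role of `F_{i+1}`. -/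
theorem effective_hamiltonian_taylor_vanish {n d p : ℕ} (hd : 0 < d) (hp : 1 ≤ p)
    (F : Fin d → Matrix (Fin n) (Fin n) ℂ) (hF : ∀ a, (F a).IsHermitian)
    (H : Matrix (Fin n) (Fin n) ℂ) (hH : H = ∑ a, F a)
    (S S' : ℝ → Matrix (Fin n) (Fin n) ℂ)
    (hS : ∀ t : ℝ, S t =
      ((List.ofFn fun a : Fin d =>
        NormedSpace.exp ((-(Complex.I * (t : ℂ))) • F a)).reverse).prod)
    (hderiv : ∀ t : ℝ, HasDerivAt S (S' t) t)
    (G : ℝ → Matrix (Fin n) (Fin n) ℂ)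
    (hG : ∀ t : ℝ, G t = Complex.I • (S' t * (S t)⁻¹))
    (horder : ∃ C δ : ℝ, 0 < δ ∧ ∀ t : ℝ, |t| ≤ δ →
      ‖S t - NormedSpace.exp ((-(Complex.I * (t : ℂ))) • H)‖ ≤ C * |t| ^ (p + 1)) :
    G 0 = H ∧ ∀ q : ℕ, 1 ≤ q → q ≤ p - 1 → iteratedDeriv q G 0 = 0 :=
  effective_hamiltonian_taylor_vanish_general hp F H S S' hS hderiv G hG horder
end
end

section
/- The linear system ∑_{i=1}^{p+1} c_i = 1 and ∑_{i=1}^{p+1} c_i / k_i^q = 0 for q = p, p+1, …, 2p−1 has a unique real solution (c_1,…,c_{p+1}) whenever k_1,…,k_{p+1} are distinct positive integers. -/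
/-!
With `xᵢ = 1 / kᵢ` the system reads `M c = (1, 0, …, 0)` for the generalized Vandermonde
matrix `M = (x_j ^ e_i)` with exponents `e = (0, p, p + 1, …, 2p − 1)`. A vector in the left
kernel of `M` is the coefficient vector of a polynomial with at most `p + 1` nonzero
coefficients vanishing at the `p + 1` distinct positive nodes `xⱼ`. Such a polynomial has at
most `p` sign changes, so by Descartes' rule of signs it has at most `p` positive roots unless it
is zero. Hence `M` is invertible.
-/
open Polynomial Finset

namespace Polynomial

theorem signVariations_lt_card_support {R : Type*} [Semiring R] [LinearOrder R] {P : R[X]}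
    (hP : P ≠ 0) : P.signVariations < #P.support := by
  induction hn : #P.support using Nat.strong_induction_on generalizing P with
  | _ n ih =>
  by_cases hE : P.eraseLead = 0
  · obtain ⟨d, c, rfl⟩ := card_support_le_one_iff_monomial.mp
      (card_support_le_one_of_eraseLead_eq_zero hE)
    rw [signVariations_monomial, ← hn, card_pos]
    exact support_nonempty.mpr hP
  · calc P.signVariations ≤ P.eraseLead.signVariations + 1 := signVariations_le_eraseLead_succ P
      _ < #P.eraseLead.support + 1 := by
        gcongr; exact ih _ (hn ▸ eraseLead_support_card_lt hP) hE rfl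
      _ = n := hn ▸ card_support_eraseLead_add_one hP

theorem eq_zero_of_card_support_le_of_forall_eval_eq_zero {R : Type*} [CommRing R]
    [LinearOrder R] [IsStrictOrderedRing R] {P : R[X]} {s : Finset R} (hpos : ∀ x ∈ s, 0 < x)
    (hroot : ∀ x ∈ s, P.eval x = 0) (hcard : #P.support ≤ #s) : P = 0 := by
  classical
  by_contra hP
  have hsub : s ⊆ (P.roots.filter (0 < ·)).toFinset := fun x hx => by
    simpa [hP, hpos x hx] using hroot x hx
  have := calc #s ≤ (P.roots.filter (0 < ·)).card :=
        (card_le_card hsub).trans (Multiset.toFinset_card_le _)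
    _ = P.roots.countP (0 < ·) := (Multiset.countP_eq_card_filter _ _).symm
    _ ≤ P.signVariations := roots_countP_pos_le_signVariations P
    _ < #P.support := signVariations_lt_card_support hP
  omega

end Polynomial

namespace Matrix

variable {ι R : Type*}

def generalizedVandermonde [Monoid R] (x : ι → R) (e : ι → ℕ) : Matrix ι ι R :=
  of fun i j => x j ^ e i

theorem det_generalizedVandermonde_ne_zero [Fintype ι] [DecidableEq ι] [CommRing R]
    [LinearOrder R] [IsStrictOrderedRing R] {x : ι → R} {e : ι → ℕ}
    (hx : Function.Injective x) (hpos : ∀ i, 0 < x i) (he : Function.Injective e) :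
    (generalizedVandermonde x e).det ≠ 0 := by
  rw [Ne, ← exists_vecMul_eq_zero_iff]
  rintro ⟨v, hv, hvM⟩
  set P : R[X] := ∑ i, monomial (e i) (v i)
  have hcoeff : ∀ i, P.coeff (e i) = v i := fun i => by
    simp [P, coeff_monomial, he.eq_iff]
  have hsupp : P.support ⊆ univ.image e := fun n hn => by
    by_contra h
    simp_all [P, coeff_monomial]
  have hP : P = 0 := by
    refine eq_zero_of_card_support_le_of_forall_eval_eq_zero (s := univ.image x) ?_ ?_ ?_
    · simpa using hpos
    · simpa [P, eval_finsetSum, vecMul, dotProduct, generalizedVandermonde, mul_comm]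
        using congrFun hvM
    · calc #P.support ≤ #(univ.image e) := card_le_card hsupp
        _ = #(univ.image x) := by rw [card_image_of_injective _ he, card_image_of_injective _ hx]
  exact hv (funext fun i => by simpa [hP] using (hcoeff i).symm)

end Matrix

theorem forall_le_le_two_mul_sub_one_iff {p : ℕ} (hp : 1 ≤ p) (P : ℕ → Prop) :
    (∀ q, p ≤ q → q ≤ 2 * p - 1 → P q) ↔ ∀ j : Fin p, P (p + j) :=
  ⟨fun h j => h _ (by omega) (by omega), fun h q hpq hq => by
    simpa [Nat.add_sub_cancel' hpq] using h ⟨q - p, by omega⟩⟩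

open Matrix in
/-- The linear system `∑_{i=1}^{p+1} cᵢ = 1`, `∑_{i=1}^{p+1} cᵢ/kᵢ^q = 0` for
`q = p, p+1, …, 2p−1`, has a unique real solution whenever `k₁ < ⋯ < k_{p+1}` are
distinct positive integers. -/
theorem mpf_coefficients_exist_unique (p : ℕ) (hp : 1 ≤ p)
    (k : Fin (p + 1) → ℕ) (hkpos : ∀ i, 0 < k i) (hk : StrictMono k) :
    ∃! c : Fin (p + 1) → ℝ,
      (∑ i, c i = 1) ∧
      ∀ q : ℕ, p ≤ q → q ≤ 2 * p - 1 → ∑ i, c i / (k i : ℝ) ^ q = 0 := by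
  set M := generalizedVandermonde (fun i => ((k i : ℝ))⁻¹) (Fin.cons 0 fun j : Fin p => p + j)
  have hM : IsUnit M := by
    rw [isUnit_iff_isUnit_det, isUnit_iff_ne_zero]
    refine det_generalizedVandermonde_ne_zero ?_ (fun i => by simpa using hkpos i) ?_
    · exact inv_injective.comp (Nat.cast_injective.comp hk.injective)
    · exact Fin.cons_injective_iff.mpr
        ⟨fun ⟨j, hj⟩ => by dsimp only at hj; omega, fun i j h => Fin.ext (by simpa using h)⟩
  have hsystem : ∀ c : Fin (p + 1) → ℝ, ((∑ i, c i = 1) ∧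
      ∀ q : ℕ, p ≤ q → q ≤ 2 * p - 1 → ∑ i, c i / (k i : ℝ) ^ q = 0) ↔
        M *ᵥ c = Pi.single 0 1 := by
    intro c
    rw [forall_le_le_two_mul_sub_one_iff hp, funext_iff, Fin.forall_fin_succ]
    simp [M, generalizedVandermonde, mulVec, dotProduct, div_eq_mul_inv, mul_comm]
  have hbij : Function.Bijective M.mulVec :=
    ⟨mulVec_injective_iff_isUnit.mpr hM, mulVec_surjective_iff_isUnit.mpr hM⟩
  exact (existsUnique_congr hsystem).mpr (hbij.existsUnique _)
end

section
/- Euler–Maclaurin formula: if f has continuous derivatives up to order s on [j₁, j₂] for integers j₁ < j₂, then ∑_{j=j₁+1}^{j₂} f(j) = ∫_{j₁}^{j₂} f(x) dx + ∑_{ℓ=1}^{s} (−1)^ℓ (B_ℓ/ℓ!)(f^{(ℓ−1)}(j₂) − f^{(ℓ−1)}(j₁)) + ((−1)^{s−1}/s!) ∫_{j₁}^{j₂} B_s(x − ⌊x⌋) f^{(s)}(x) dx. -/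
/-!
On a unit interval `[a, a + 1]`, integrating `B_k(x - a) f⁽ᵏ⁾(x)` by parts trades it for a
boundary term `B_{k+1} (f⁽ᵏ⁾(a + 1) - f⁽ᵏ⁾(a))` and the next integral `∫ B_{k+1}(x - a) f⁽ᵏ⁺¹⁾`;
the boundary values agree because `B_{k+1}(1) = B_{k+1}(0)` for `k ≥ 1`, while for `k = 0` the
jump `B_1(1) - B_1(0) = 1` produces `f(a + 1)`. Induction on `s` gives the formula on one unit
interval. Summing over `[j, j + 1]`, `j₁ ≤ j < j₂`, the boundary terms telescope, and on each piece
`x - j = {x}` away from the right endpoint, which glues the remainders into one integral of the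
periodic function `B_s({x})`.
-/

open Set MeasureTheory intervalIntegral
open scoped Interval

theorem ContDiffOn.hasDerivWithinAt_iteratedDerivWithin {𝕜 F : Type*} [NontriviallyNormedField 𝕜]
    [NormedAddCommGroup F] [NormedSpace 𝕜 F] {f : 𝕜 → F} {s : Set 𝕜} {n : WithTop ℕ∞} {m : ℕ}
    {x : 𝕜} (hf : ContDiffOn 𝕜 n f s) (hm : m < n) (hs : UniqueDiffOn 𝕜 s) (hx : x ∈ s) :
    HasDerivWithinAt (iteratedDerivWithin m f s) (iteratedDerivWithin (m + 1) f s x) s x := by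
  rw [iteratedDerivWithin_succ]
  exact (hf.differentiableOn_iteratedDerivWithin hm hs x hx).hasDerivWithinAt

theorem Int.fract_eq_sub_of_mem_Ico {R : Type*} [Ring R] [LinearOrder R] [IsStrictOrderedRing R]
    [FloorRing R] {x : R} {k : ℤ} (hx : x ∈ Ico (k : R) (k + 1)) : Int.fract x = x - k :=
  Int.fract_eq_iff.2 ⟨sub_nonneg.2 hx.1, sub_lt_iff_lt_add'.2 hx.2, k, sub_sub_cancel x k⟩

theorem intervalIntegrable_bernoulliFun_fract (s : ℕ) (a b : ℝ) :
    IntervalIntegrable (fun x ↦ bernoulliFun s (Int.fract x)) volume a b := by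
  refine Function.Periodic.intervalIntegrable₀ (fun x ↦ by simp) one_ne_zero ?_ a b
  refine (continuous_bernoulliFun s).intervalIntegrable 0 1 |>.congr_uIoo fun x hx ↦ ?_
  rw [uIoo_of_le zero_le_one] at hx
  simp [Int.fract_eq_self.mpr ⟨hx.1.le, hx.2⟩]

theorem integral_bernoulliFun_fract_mul (s : ℕ) (k : ℤ) (h : ℝ → ℝ) :
    ∫ x in (k : ℝ)..k + 1, bernoulliFun s (Int.fract x) * h x =
      ∫ x in (k : ℝ)..k + 1, bernoulliFun s (x - k) * h x :=
  integral_congr_Ioo_of_le (by linarith) fun x hx ↦ by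
    rw [Int.fract_eq_sub_of_mem_Ico (Ioo_subset_Ico_self hx)]

theorem integral_bernoulliFun_sub_mul (k : ℕ) (a b c : ℝ) {v v' : ℝ → ℝ}
    (hv : ∀ x ∈ [[a, b]], HasDerivWithinAt v (v' x) [[a, b]] x)
    (hv' : IntervalIntegrable v' volume a b) :
    (k + 1) * ∫ x in a..b, bernoulliFun k (x - c) * v x =
      bernoulliFun (k + 1) (b - c) * v b - bernoulliFun (k + 1) (a - c) * v a -
        ∫ x in a..b, bernoulliFun (k + 1) (x - c) * v' x := by
  have hB : ∀ x ∈ [[a, b]], HasDerivWithinAt (fun x ↦ bernoulliFun (k + 1) (x - c))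
      ((k + 1) * bernoulliFun k (x - c)) [[a, b]] x := fun x _ ↦ by
    simpa using ((hasDerivAt_bernoulliFun (k + 1) (x - c)).comp_sub_const x c).hasDerivWithinAt
  rw [integral_mul_deriv_eq_deriv_mul_of_hasDerivWithinAt hB hv
    (Continuous.intervalIntegrable (by fun_prop) a b) hv']
  simp only [mul_assoc, intervalIntegral.integral_const_mul]
  ring

theorem bernoulli_remainder_succ {k : ℕ} (hk : k ≠ 0) (a : ℝ) {v v' : ℝ → ℝ}
    (hv : ∀ x ∈ [[a, a + 1]], HasDerivWithinAt v (v' x) [[a, a + 1]] x)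
    (hv' : IntervalIntegrable v' volume a (a + 1)) :
    (-1) ^ (k - 1) / k.factorial * ∫ x in a..a + 1, bernoulliFun k (x - a) * v x =
      (-1) ^ (k + 1) * (bernoulli (k + 1) / (k + 1).factorial) * (v (a + 1) - v a) +
        (-1) ^ k / (k + 1).factorial * ∫ x in a..a + 1, bernoulliFun (k + 1) (x - a) * v' x := by
  have hparts := integral_bernoulliFun_sub_mul k a (a + 1) a hv hv'
  rw [add_sub_cancel_left, sub_self, bernoulliFun_endpoints_eq_of_ne_one (by omega),
    bernoulliFun_eval_zero] at hparts
  have hsign : (-1 : ℝ) ^ k = -(-1) ^ (k - 1) ∧ (-1 : ℝ) ^ (k + 1) = (-1) ^ (k - 1) := by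
    obtain ⟨t, rfl⟩ := Nat.exists_eq_succ_of_ne_zero hk
    simp [pow_succ]
  rw [hsign.1, hsign.2, Nat.factorial_succ, Nat.cast_mul, Nat.cast_succ]
  field_simp
  linear_combination hparts

theorem apply_add_one_eq_integral_add_sum_bernoulli {s : ℕ} (hs : 1 ≤ s) {a : ℝ} {S : Set ℝ}
    (haS : [[a, a + 1]] ⊆ S) {g : ℕ → ℝ → ℝ}
    (hg : ∀ ℓ < s, ∀ x ∈ S, HasDerivWithinAt (g ℓ) (g (ℓ + 1) x) S x)
    (hgs : ContinuousOn (g s) S) :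
    g 0 (a + 1) = (∫ x in a..a + 1, g 0 x) +
      (∑ ℓ ∈ Finset.Icc 1 s, (-1) ^ ℓ * (bernoulli ℓ / ℓ.factorial) *
        (g (ℓ - 1) (a + 1) - g (ℓ - 1) a)) +
      (-1) ^ (s - 1) / s.factorial * ∫ x in a..a + 1, bernoulliFun s (x - a) * g s x := by
  induction s, hs using Nat.le_induction with
  | base =>
    have hparts := integral_bernoulliFun_sub_mul 0 a (a + 1) a
      (fun x hx ↦ (hg 0 one_pos x (haS hx)).mono haS) ((hgs.mono haS).intervalIntegrable)
    simp only [Nat.cast_zero, zero_add, one_mul, bernoulliFun_zero, add_sub_cancel_left, sub_self,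
      bernoulliFun_one] at hparts
    norm_num [bernoulli_one]
    linarith
  | succ s hs ih =>
    have hgs' : ContinuousOn (g s) S := fun x hx ↦ (hg s s.lt_succ_self x hx).continuousWithinAt
    rw [Finset.sum_Icc_succ_top (by omega), ih (fun ℓ hℓ ↦ hg ℓ (by omega)) hgs',
      bernoulli_remainder_succ (by omega) a (fun x hx ↦ (hg s s.lt_succ_self x (haS hx)).mono haS)
        ((hgs.mono haS).intervalIntegrable), Nat.add_sub_cancel]
    ring

theorem sum_Icc_eq_integral_add_sum_bernoulli {s : ℕ} (hs : 1 ≤ s) {j₁ j₂ : ℤ} (hj : j₁ ≤ j₂)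
    {S : Set ℝ} (hS : Icc (j₁ : ℝ) j₂ ⊆ S) {g : ℕ → ℝ → ℝ}
    (hg : ∀ ℓ < s, ∀ x ∈ S, HasDerivWithinAt (g ℓ) (g (ℓ + 1) x) S x)
    (hgs : ContinuousOn (g s) S) :
    ∑ j ∈ Finset.Icc (j₁ + 1) j₂, g 0 j = (∫ x in (j₁ : ℝ)..j₂, g 0 x) +
      (∑ ℓ ∈ Finset.Icc 1 s, (-1) ^ ℓ * (bernoulli ℓ / ℓ.factorial) *
        (g (ℓ - 1) j₂ - g (ℓ - 1) j₁)) +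
      (-1) ^ (s - 1) / s.factorial * ∫ x in (j₁ : ℝ)..j₂, bernoulliFun s (Int.fract x) * g s x := by
  have hg₀ : ContinuousOn (g 0) S := fun x hx ↦ (hg 0 hs x hx).continuousWithinAt
  induction j₂, hj using Int.leInduction with
  | base => simp
  | succ n hn ih =>
    push_cast at hS ⊢
    have hnS : Icc (j₁ : ℝ) n ⊆ S := (Icc_subset_Icc_right (by linarith)).trans hS
    have hn₁S : [[(n : ℝ), n + 1]] ⊆ S := by
      rw [uIcc_of_le (by linarith)]
      exact (Icc_subset_Icc_left (by exact_mod_cast hn)).trans hS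
    have hj₁nS : [[(j₁ : ℝ), n]] ⊆ S := by rwa [uIcc_of_le (by exact_mod_cast hn)]
    rw [← Finset.insert_Icc_right_eq_Icc_add_one (by omega),
      Finset.sum_insert (by simp), add_comm, ih hnS, Int.cast_add, Int.cast_one,
      apply_add_one_eq_integral_add_sum_bernoulli hs hn₁S hg hgs, ← integral_bernoulliFun_fract_mul,
      ← integral_add_adjacent_intervals ((hg₀.mono hj₁nS).intervalIntegrable)
        ((hg₀.mono hn₁S).intervalIntegrable),
      ← integral_add_adjacent_intervals
        ((intervalIntegrable_bernoulliFun_fract s _ _).mul_continuousOn (hgs.mono hj₁nS))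
        ((intervalIntegrable_bernoulliFun_fract s _ _).mul_continuousOn (hgs.mono hn₁S))]
    simp only [mul_sub, Finset.sum_sub_distrib]
    ring

/-- Euler–Maclaurin formula: if `f` is `C^s` on `[j₁, j₂]` for integers `j₁ < j₂`, then
`∑_{j=j₁+1}^{j₂} f(j) = ∫_{j₁}^{j₂} f + ∑_{ℓ=1}^{s} (−1)^ℓ (B_ℓ/ℓ!)(f^{(ℓ−1)}(j₂) − f^{(ℓ−1)}(j₁))
+ ((−1)^{s−1}/s!) ∫_{j₁}^{j₂} B_s(x−⌊x⌋) f^{(s)}(x) dx`. -/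
theorem euler_maclaurin (s : ℕ) (hs : 1 ≤ s) (j₁ j₂ : ℤ) (hj : j₁ < j₂)
    (f : ℝ → ℝ) (hf : ContDiffOn ℝ s f (Set.Icc (j₁ : ℝ) (j₂ : ℝ))) :
    ∑ j ∈ Finset.Icc (j₁ + 1) j₂, f (j : ℝ) =
      (∫ x in (j₁ : ℝ)..(j₂ : ℝ), f x) +
      (∑ ℓ ∈ Finset.Icc 1 s, (-1 : ℝ) ^ ℓ * ((bernoulli ℓ : ℝ) / ℓ.factorial) *
        (iteratedDerivWithin (ℓ - 1) f (Set.Icc (j₁ : ℝ) (j₂ : ℝ)) (j₂ : ℝ) -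
         iteratedDerivWithin (ℓ - 1) f (Set.Icc (j₁ : ℝ) (j₂ : ℝ)) (j₁ : ℝ))) +
      ((-1 : ℝ) ^ (s - 1) / s.factorial) *
        ∫ x in (j₁ : ℝ)..(j₂ : ℝ),
          (Polynomial.aeval (Int.fract x) (Polynomial.bernoulli s)) *
            iteratedDerivWithin s f (Set.Icc (j₁ : ℝ) (j₂ : ℝ)) x := by
  have hunique : UniqueDiffOn ℝ (Icc (j₁ : ℝ) j₂) := uniqueDiffOn_Icc (by exact_mod_cast hj)
  have h := sum_Icc_eq_integral_add_sum_bernoulli hs hj.le subset_rfl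
    (g := fun ℓ ↦ iteratedDerivWithin ℓ f (Icc (j₁ : ℝ) j₂))
    (fun ℓ hℓ x hx ↦ hf.hasDerivWithinAt_iteratedDerivWithin (by exact_mod_cast hℓ) hunique hx)
    (hf.continuousOn_iteratedDerivWithin le_rfl hunique)
  simpa [iteratedDerivWithin_zero, bernoulliFun, Polynomial.eval_map_algebraMap] using h
end

section
/- Locality of commutators: suppose F₁ = ∑_α F_{1,α} and F₂ = ∑_β F_{2,β} are operators on n qubits where each F_{i,α} acts nontrivially on at most k_i qubits and, for every qubit q, ∑_{α : supp(F_{i,α}) ∋ q} ‖F_{i,α}‖ ≤ J_i. Then [F₁, F₂] admits a decomposition into terms each supported on at most k₁ + k₂ − 1 qubits with, for every qubit q, the sum of norms of terms supported on q at most 2 J₁ J₂ (k₁ + k₂). -/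
/-!
Expand `[F₁, F₂] = ∑_{a,b} [F₁ a, F₂ b]`. A pair with disjoint supports commutes; otherwise
`[F₁ a, F₂ b]` is supported on `A₁ a ∪ A₂ b`, of size at most `k₁ + k₂ - 1`, and has norm at most
`2 ‖F₁ a‖ ‖F₂ b‖`. A pair whose support contains the qubit `q` has `q ∈ A₁ a` or `q ∈ A₂ b`. In
the first case `A₂ b` meets `A₁ a` in one of its at most `k₁` qubits `r`, and the terms `F₂ b`
through `r` have total norm at most `J₂`; so these pairs contribute at most `J₁ · k₁ J₂`, and
symmetrically the others at most `J₂ · k₂ J₁`.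
-/

noncomputable section

/-- The operator (spectral) norm of a complex matrix. -/
def opNorm {m : Type*} [Fintype m] [DecidableEq m] (X : Matrix m m ℂ) : ℝ :=
  ‖Matrix.toEuclideanCLM (𝕜 := ℂ) X‖

/-- An operator `X` on `n` qubits (acting on `(ℂ²)^{⊗n}`, realized as matrices indexed by
`Fin n → Fin 2`) is supported on the set of qubits `A` if it acts as the identity on the
qubits outside `A`. -/
def SupportedOn {n : ℕ} (A : Finset (Fin n))
    (X : Matrix (Fin n → Fin 2) (Fin n → Fin 2) ℂ) : Prop :=
  (∀ x y : Fin n → Fin 2, (∃ q ∉ A, x q ≠ y q) → X x y = 0) ∧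
  (∀ x x' y y' : Fin n → Fin 2, (∀ q ∈ A, x q = x' q) → (∀ q ∈ A, y q = y' q) →
    (∀ q ∉ A, x q = y q) → (∀ q ∉ A, x' q = y' q) → X x y = X x' y')

open Finset

lemma norm_mul_sub_mul_le {R : Type*} [NonUnitalSeminormedRing R] (a b : R) :
    ‖a * b - b * a‖ ≤ 2 * (‖a‖ * ‖b‖) :=
  calc ‖a * b - b * a‖ ≤ ‖a‖ * ‖b‖ + ‖b‖ * ‖a‖ :=
        (norm_sub_le _ _).trans (add_le_add (norm_mul_le a b) (norm_mul_le b a))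
    _ = 2 * (‖a‖ * ‖b‖) := by ring

lemma opNorm_nonneg {m : Type*} [Fintype m] [DecidableEq m] (X : Matrix m m ℂ) :
    0 ≤ opNorm X :=
  norm_nonneg _

lemma opNorm_mul_sub_mul_le {m : Type*} [Fintype m] [DecidableEq m] (X Y : Matrix m m ℂ) :
    opNorm (X * Y - Y * X) ≤ 2 * (opNorm X * opNorm Y) := by
  unfold opNorm
  rw [map_sub, map_mul, map_mul]
  exact norm_mul_sub_mul_le _ _

lemma Finset.card_union_le_of_not_disjoint {α : Type*} [DecidableEq α] {s t : Finset α}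
    {k k' : ℕ} (hst : ¬Disjoint s t) (hs : #s ≤ k) (ht : #t ≤ k') : #(s ∪ t) ≤ k + k' - 1 := by
  have := card_union_add_card_inter s t
  have := (not_disjoint_iff_nonempty_inter.mp hst).card_pos
  omega

namespace SupportedOn

variable {n : ℕ} {A B : Finset (Fin n)} {X Y : Matrix (Fin n → Fin 2) (Fin n → Fin 2) ℂ}

lemma apply_eq_zero (hX : SupportedOn A X) {x y : Fin n → Fin 2} {q : Fin n} (hq : q ∉ A)
    (hxy : x q ≠ y q) : X x y = 0 :=
  hX.1 x y ⟨q, hq, hxy⟩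

lemma apply_add_add (hX : SupportedOn A X) {d : Fin n → Fin 2} (hd : ∀ q ∈ A, d q = 0)
    (x y : Fin n → Fin 2) : X (x + d) (y + d) = X x y := by
  by_cases h : ∀ q ∉ A, x q = y q
  · refine hX.2 _ _ _ _ (fun q _ => ?_) (fun q _ => ?_) (fun q _ => ?_) h <;>
      simp [hd q, h q, *]
  · obtain ⟨q, hq, hxy⟩ := not_forall₂.mp h
    rw [hX.apply_eq_zero hq hxy, hX.apply_eq_zero hq (by simpa using hxy)]

/- As `Fin 2` is an additive group, the second clause of `SupportedOn` says that `X` is invariant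
under translating both indices by a pattern vanishing on `A`; in this form supports of products
are easy to control. -/
lemma of_apply_add_add (h0 : ∀ x y, (∃ q ∉ A, x q ≠ y q) → X x y = 0)
    (hd : ∀ d : Fin n → Fin 2, (∀ q ∈ A, d q = 0) → ∀ x y, X (x + d) (y + d) = X x y) :
    SupportedOn A X := by
  refine ⟨h0, fun x x' y y' hx hy hxy hx'y' => ?_⟩
  have hy' : y' = y + (x' - x) := funext fun q => by
    by_cases hq : q ∈ A
    · simp [← hx q hq, hy q hq]
    · simp [← hxy q hq, hx'y' q hq]
  rw [hy', ← hd (x' - x) (fun q hq => by simp [hx q hq]), add_sub_cancel]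

lemma zero : SupportedOn A (0 : Matrix (Fin n → Fin 2) (Fin n → Fin 2) ℂ) :=
  ⟨fun _ _ _ => rfl, fun _ _ _ _ _ _ _ _ => rfl⟩

lemma sub (hX : SupportedOn A X) (hY : SupportedOn A Y) : SupportedOn A (X - Y) :=
  of_apply_add_add (fun x y h => by simp [hX.1 x y h, hY.1 x y h])
    fun _ hd x y => by simp [hX.apply_add_add hd, hY.apply_add_add hd]

lemma mono (hX : SupportedOn A X) (hAB : A ⊆ B) : SupportedOn B X :=
  of_apply_add_add (fun _ _ ⟨_, hq, hxy⟩ => hX.apply_eq_zero (fun h => hq (hAB h)) hxy)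
    fun _ hd => hX.apply_add_add fun q hq => hd q (hAB hq)

lemma mul (hX : SupportedOn A X) (hY : SupportedOn B Y) : SupportedOn (A ∪ B) (X * Y) := by
  refine of_apply_add_add (fun x y ⟨q, hq, hxy⟩ => ?_) fun d hd x y => ?_
  · rw [mem_union, not_or] at hq
    rw [Matrix.mul_apply]
    refine sum_eq_zero fun z _ => ?_
    by_cases hz : x q = z q
    · rw [hY.apply_eq_zero hq.2 (hz ▸ hxy), mul_zero]
    · rw [hX.apply_eq_zero hq.1 hz, zero_mul]
  · simp only [Matrix.mul_apply]
    refine (Fintype.sum_equiv (Equiv.addRight d) _ _ fun z => ?_).symm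
    rw [Equiv.coe_addRight, hX.apply_add_add fun q hq => hd q (mem_union_left _ hq),
      hY.apply_add_add fun q hq => hd q (mem_union_right _ hq)]

lemma mul_sub_mul (hX : SupportedOn A X) (hY : SupportedOn B Y) :
    SupportedOn (A ∪ B) (X * Y - Y * X) :=
  (hX.mul hY).sub ((hY.mul hX).mono (union_comm B A).le)

lemma mul_apply_of_disjoint (hX : SupportedOn A X) (hY : SupportedOn B Y) (hAB : Disjoint A B)
    (x y : Fin n → Fin 2) : (X * Y) x y = X x (A.piecewise y x) * Y (A.piecewise y x) y := by
  refine Fintype.sum_eq_single _ fun z hz => ?_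
  obtain ⟨q, hq⟩ := Function.ne_iff.mp hz
  show X x z * Y z y = 0
  by_cases hqA : q ∈ A
  · rw [piecewise_eq_of_mem _ _ _ hqA] at hq
    rw [hY.apply_eq_zero (disjoint_left.mp hAB hqA) hq, mul_zero]
  · rw [piecewise_eq_of_notMem _ _ _ hqA] at hq
    rw [hX.apply_eq_zero hqA (Ne.symm hq), zero_mul]

lemma commute_of_disjoint (hX : SupportedOn A X) (hY : SupportedOn B Y) (hAB : Disjoint A B) :
    Commute X Y := by
  ext x y
  by_cases h : ∀ q ∉ A ∪ B, x q = y q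
  · rw [mul_apply_of_disjoint hX hY hAB, mul_apply_of_disjoint hY hX hAB.symm, mul_comm]
    congr 1
    · refine hY.2 _ _ _ _ ?_ ?_ ?_ ?_ <;> intro q _ <;>
        by_cases hqA : q ∈ A <;> by_cases hqB : q ∈ B <;> simp_all [piecewise, disjoint_left]
    · refine hX.2 _ _ _ _ ?_ ?_ ?_ ?_ <;> intro q _ <;>
        by_cases hqA : q ∈ A <;> by_cases hqB : q ∈ B <;> simp_all [piecewise, disjoint_left]
  · obtain ⟨q, hq, hxy⟩ := not_forall₂.mp h
    rw [(hX.mul hY).apply_eq_zero hq hxy, (hY.mul hX).apply_eq_zero (union_comm A B ▸ hq) hxy]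

end SupportedOn

section Counting

variable {Q ι κ : Type*} [DecidableEq Q] [Fintype ι] [Fintype κ]

lemma sum_filter_not_disjoint_le (B : κ → Finset Q) {g : κ → ℝ} (hg : ∀ b, 0 ≤ g b)
    (S : Finset Q) :
    ∑ b with ¬Disjoint S (B b), g b ≤ ∑ r ∈ S, ∑ b with r ∈ B b, g b := by
  calc ∑ b with ¬Disjoint S (B b), g b
      ≤ ∑ b, #(S ∩ B b) • g b := by
        rw [sum_filter]
        refine sum_le_sum fun b _ => ?_
        split_ifs with h
        · exact smul_nonneg (Nat.zero_le _) (hg b)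
        · rw [not_disjoint_iff_nonempty_inter] at h
          exact le_smul_of_one_le_left (hg b) h.card_pos
    _ = ∑ r ∈ S, ∑ b with r ∈ B b, g b := by
        simp only [sum_filter]
        rw [sum_comm]
        refine sum_congr rfl fun b _ => ?_
        rw [← sum_filter, filter_mem_eq_inter, sum_const]

lemma sum_filter_not_disjoint_le_card_mul (B : κ → Finset Q) {g : κ → ℝ} (hg : ∀ b, 0 ≤ g b)
    {J : ℝ} (hJ : ∀ r, ∑ b with r ∈ B b, g b ≤ J) (S : Finset Q) :
    ∑ b with ¬Disjoint S (B b), g b ≤ #S * J := by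
  calc ∑ b with ¬Disjoint S (B b), g b ≤ ∑ r ∈ S, ∑ b with r ∈ B b, g b :=
        sum_filter_not_disjoint_le B hg S
    _ ≤ ∑ _r ∈ S, J := sum_le_sum fun r _ => hJ r
    _ = #S * J := by rw [sum_const, nsmul_eq_mul]

lemma sum_filter_mem_fst_not_disjoint_le (A : ι → Finset Q) (B : κ → Finset Q)
    {f : ι → ℝ} {g : κ → ℝ} (hf : ∀ a, 0 ≤ f a) (hg : ∀ b, 0 ≤ g b)
    {k : ℕ} (hk : ∀ a, #(A a) ≤ k) {J J' : ℝ} (hJ' : 0 ≤ J')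
    (hfJ : ∀ q, ∑ a with q ∈ A a, f a ≤ J) (hgJ : ∀ q, ∑ b with q ∈ B b, g b ≤ J') (q : Q) :
    ∑ p : ι × κ with q ∈ A p.1 ∧ ¬Disjoint (A p.1) (B p.2), f p.1 * g p.2 ≤ J * (k * J') := by
  have hfiber : ∀ a, ∑ b with ¬Disjoint (A a) (B b), g b ≤ k * J' := fun a =>
    (sum_filter_not_disjoint_le_card_mul B hg hgJ (A a)).trans
      (mul_le_mul_of_nonneg_right (by exact_mod_cast hk a) hJ')
  calc ∑ p : ι × κ with q ∈ A p.1 ∧ ¬Disjoint (A p.1) (B p.2), f p.1 * g p.2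
      = ∑ a with q ∈ A a, f a * ∑ b with ¬Disjoint (A a) (B b), g b := by
        simp only [sum_filter, Fintype.sum_prod_type, mul_sum, ite_and, sum_ite_irrel,
          mul_ite, mul_zero, sum_const_zero]
    _ ≤ ∑ a with q ∈ A a, f a * (k * J') :=
        sum_le_sum fun a _ => mul_le_mul_of_nonneg_left (hfiber a) (hf a)
    _ = (∑ a with q ∈ A a, f a) * (k * J') := by rw [sum_mul]
    _ ≤ J * (k * J') := mul_le_mul_of_nonneg_right (hfJ q) (by positivity)

lemma sum_filter_mem_union_not_disjoint_le (A : ι → Finset Q) (B : κ → Finset Q)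
    {f : ι → ℝ} {g : κ → ℝ} (hf : ∀ a, 0 ≤ f a) (hg : ∀ b, 0 ≤ g b)
    {k k' : ℕ} (hk : ∀ a, #(A a) ≤ k) (hk' : ∀ b, #(B b) ≤ k') {J J' : ℝ} (hJ : 0 ≤ J)
    (hJ' : 0 ≤ J') (hfJ : ∀ q, ∑ a with q ∈ A a, f a ≤ J)
    (hgJ : ∀ q, ∑ b with q ∈ B b, g b ≤ J') (q : Q) :
    ∑ p : ι × κ with q ∈ A p.1 ∪ B p.2 ∧ ¬Disjoint (A p.1) (B p.2), f p.1 * g p.2 ≤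
      J * J' * (k + k') := by
  have hswap : ∑ p : ι × κ with q ∈ B p.2 ∧ ¬Disjoint (A p.1) (B p.2), f p.1 * g p.2 =
      ∑ p : κ × ι with q ∈ B p.1 ∧ ¬Disjoint (B p.1) (A p.2), g p.1 * f p.2 := by
    simp only [sum_filter]
    exact Fintype.sum_equiv (Equiv.prodComm ι κ) _ _ fun p => by
      simp [disjoint_comm, mul_comm]
  calc ∑ p : ι × κ with q ∈ A p.1 ∪ B p.2 ∧ ¬Disjoint (A p.1) (B p.2), f p.1 * g p.2
      ≤ ∑ p : ι × κ with q ∈ A p.1 ∧ ¬Disjoint (A p.1) (B p.2), f p.1 * g p.2 +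
        ∑ p : ι × κ with q ∈ B p.2 ∧ ¬Disjoint (A p.1) (B p.2), f p.1 * g p.2 := by
        simp only [sum_filter, ← sum_add_distrib, mem_union]
        have := fun p : ι × κ => mul_nonneg (hf p.1) (hg p.2)
        exact sum_le_sum fun p _ => by split_ifs <;> grind
    _ ≤ J * (k * J') + J' * (k' * J) := by
        rw [hswap]
        exact add_le_add (sum_filter_mem_fst_not_disjoint_le A B hf hg hk hJ' hfJ hgJ q)
          (sum_filter_mem_fst_not_disjoint_le B A hg hf hk' hJ hgJ hfJ q)
    _ = J * J' * (k + k') := by ring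

end Counting

theorem commutator_locality_general {n k₁ k₂ : ℕ} {J₁ J₂ : ℝ} (hJ₁ : 0 ≤ J₁) (hJ₂ : 0 ≤ J₂)
    {ι₁ ι₂ : Type*} [Fintype ι₁] [Fintype ι₂]
    (F₁ : ι₁ → Matrix (Fin n → Fin 2) (Fin n → Fin 2) ℂ)
    (F₂ : ι₂ → Matrix (Fin n → Fin 2) (Fin n → Fin 2) ℂ)
    (A₁ : ι₁ → Finset (Fin n)) (A₂ : ι₂ → Finset (Fin n))
    (hsupp₁ : ∀ a, SupportedOn (A₁ a) (F₁ a)) (hsupp₂ : ∀ b, SupportedOn (A₂ b) (F₂ b))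
    (hcard₁ : ∀ a, (A₁ a).card ≤ k₁) (hcard₂ : ∀ b, (A₂ b).card ≤ k₂)
    (hnorm₁ : ∀ q : Fin n, ∑ a ∈ Finset.univ.filter (fun a => q ∈ A₁ a), opNorm (F₁ a) ≤ J₁)
    (hnorm₂ : ∀ q : Fin n, ∑ b ∈ Finset.univ.filter (fun b => q ∈ A₂ b), opNorm (F₂ b) ≤ J₂) :
    ∃ (G : ι₁ × ι₂ → Matrix (Fin n → Fin 2) (Fin n → Fin 2) ℂ)
      (B : ι₁ × ι₂ → Finset (Fin n)),
      ((∑ a, F₁ a) * (∑ b, F₂ b) - (∑ b, F₂ b) * (∑ a, F₁ a) = ∑ p, G p) ∧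
      (∀ p, SupportedOn (B p) (G p) ∧ (B p).card ≤ k₁ + k₂ - 1) ∧
      (∀ q : Fin n, ∑ p ∈ Finset.univ.filter (fun p => q ∈ B p), opNorm (G p) ≤
        2 * J₁ * J₂ * (k₁ + k₂)) := by
  refine ⟨fun p => F₁ p.1 * F₂ p.2 - F₂ p.2 * F₁ p.1,
    fun p => if Disjoint (A₁ p.1) (A₂ p.2) then ∅ else A₁ p.1 ∪ A₂ p.2,
    ?_, fun p => ?_, fun q => ?_⟩
  · rw [Fintype.sum_mul_sum, Fintype.sum_mul_sum, sum_comm (f := fun b a => F₂ b * F₁ a),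
      ← sum_sub_distrib, Fintype.sum_prod_type]
    simp only [sum_sub_distrib]
  · dsimp only
    split_ifs with h
    · rw [((hsupp₁ p.1).commute_of_disjoint (hsupp₂ p.2) h).eq, sub_self]
      exact ⟨SupportedOn.zero, by simp⟩
    · exact ⟨(hsupp₁ p.1).mul_sub_mul (hsupp₂ p.2),
        card_union_le_of_not_disjoint h (hcard₁ p.1) (hcard₂ p.2)⟩
  · have hfilter : univ.filter (fun p : ι₁ × ι₂ => q ∈
        if Disjoint (A₁ p.1) (A₂ p.2) then ∅ else A₁ p.1 ∪ A₂ p.2) =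
        univ.filter (fun p => q ∈ A₁ p.1 ∪ A₂ p.2 ∧ ¬Disjoint (A₁ p.1) (A₂ p.2)) :=
      filter_congr fun p _ => by split_ifs <;> simp [*]
    calc _ ≤ ∑ p : ι₁ × ι₂ with q ∈ A₁ p.1 ∪ A₂ p.2 ∧ ¬Disjoint (A₁ p.1) (A₂ p.2),
          2 * (opNorm (F₁ p.1) * opNorm (F₂ p.2)) :=
          hfilter ▸ sum_le_sum fun p _ => opNorm_mul_sub_mul_le _ _
      _ ≤ 2 * (J₁ * J₂ * (k₁ + k₂)) := by
          rw [← mul_sum]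
          gcongr
          exact sum_filter_mem_union_not_disjoint_le A₁ A₂ (fun _ => opNorm_nonneg _)
            (fun _ => opNorm_nonneg _) hcard₁ hcard₂ hJ₁ hJ₂ hnorm₁ hnorm₂ q
      _ = 2 * J₁ * J₂ * (k₁ + k₂) := by ring

/-- Locality of commutators: if `F₁ = ∑_α F_{1,α}` and `F₂ = ∑_β F_{2,β}` are `n`-qubit
operators whose terms act on at most `k₁` resp. `k₂` qubits and whose per-qubit sums of
norms are at most `J₁` resp. `J₂`, then `[F₁, F₂]` decomposes into terms each supported on
at most `k₁ + k₂ − 1` qubits with per-qubit sums of norms at most `2 J₁ J₂ (k₁ + k₂)`. -/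
theorem commutator_locality {n k₁ k₂ : ℕ} {J₁ J₂ : ℝ} (hJ₁ : 0 ≤ J₁) (hJ₂ : 0 ≤ J₂)
    {ι₁ ι₂ : Type*} [Fintype ι₁] [Fintype ι₂] [DecidableEq ι₁] [DecidableEq ι₂]
    (F₁ : ι₁ → Matrix (Fin n → Fin 2) (Fin n → Fin 2) ℂ)
    (F₂ : ι₂ → Matrix (Fin n → Fin 2) (Fin n → Fin 2) ℂ)
    (A₁ : ι₁ → Finset (Fin n)) (A₂ : ι₂ → Finset (Fin n))
    (hsupp₁ : ∀ a, SupportedOn (A₁ a) (F₁ a)) (hsupp₂ : ∀ b, SupportedOn (A₂ b) (F₂ b))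
    (hcard₁ : ∀ a, (A₁ a).card ≤ k₁) (hcard₂ : ∀ b, (A₂ b).card ≤ k₂)
    (hnorm₁ : ∀ q : Fin n, ∑ a ∈ Finset.univ.filter (fun a => q ∈ A₁ a), opNorm (F₁ a) ≤ J₁)
    (hnorm₂ : ∀ q : Fin n, ∑ b ∈ Finset.univ.filter (fun b => q ∈ A₂ b), opNorm (F₂ b) ≤ J₂) :
    ∃ (G : ι₁ × ι₂ → Matrix (Fin n → Fin 2) (Fin n → Fin 2) ℂ)
      (B : ι₁ × ι₂ → Finset (Fin n)),
      ((∑ a, F₁ a) * (∑ b, F₂ b) - (∑ b, F₂ b) * (∑ a, F₁ a) = ∑ p, G p) ∧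
      (∀ p, SupportedOn (B p) (G p) ∧ (B p).card ≤ k₁ + k₂ - 1) ∧
      (∀ q : Fin n, ∑ p ∈ Finset.univ.filter (fun p => q ∈ B p), opNorm (G p) ≤
        2 * J₁ * J₂ * (k₁ + k₂)) :=
  commutator_locality_general hJ₁ hJ₂ F₁ F₂ A₁ A₂ hsupp₁ hsupp₂ hcard₁ hcard₂ hnorm₁ hnorm₂
end
end
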